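/- arXiv:2002.03330 — 8 statements merged into one kernel-verified Lean document; each statement's English description precedes it below -/
import Mathlib

section
/- Let G and H be finite groups such that no nontrivial subquotient of G is isomorphic to a subquotient of H. If ⟨g₁,g₂⟩ = G and ⟨h₁,h₂⟩ = H, then ⟨(g₁,h₁),(g₂,h₂)⟩ = G × H. -/
open SimpleGraph

/-- The generating graph of a group: `g ~ h` iff `g ≠ h` and `⟨g,h⟩ = G`. -/
def genGraph (G : Type*) [Group G] : SimpleGraph G where
  Adj g h := g ≠ h ∧ Subgroup.closure {g, h} = ⊤
  symm := ⟨by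
    rintro g h ⟨hne, hgen⟩
    exact ⟨hne.symm, by rwa [Set.pair_comm]⟩⟩
  loopless := ⟨fun g h => h.1 rfl⟩

/-- A group is 2-generated if it is generated by two elements. -/
def TwoGenerated (G : Type*) [Group G] : Prop :=
  ∃ x y : G, Subgroup.closure {x, y} = ⊤

/-- The set of non-isolated vertices of the generating graph. -/
def nonIso (G : Type*) [Group G] : Set G := {g | ∃ h, (genGraph G).Adj g h}

/-- `Δ(G)`: the generating graph with isolated vertices removed. -/
def deltaGraph (G : Type*) [Group G] : SimpleGraph (nonIso G) :=
  (genGraph G).induce (nonIso G)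

/-!
By Goursat's lemma, a subgroup `I ≤ G × H` projecting onto both factors contains
`I.goursatFst × I.goursatSnd`, and induces an isomorphism `G ⧸ I.goursatFst ≃* H ⧸ I.goursatSnd`.
Both quotients are quotients of the whole groups, so the hypothesis forces them to be trivial,
and then `I = G × H`. The subgroup generated by `(g₁, h₁)` and `(g₂, h₂)` projects onto
`⟨g₁, g₂⟩ = G` and `⟨h₁, h₂⟩ = H`.
-/

open Function

namespace QuotientGroup

variable {G : Type*} [Group G]

noncomputable def quotientSubgroupOfTopEquiv (N : Subgroup G) [N.Normal] :
    (⊤ : Subgroup G) ⧸ N.subgroupOf ⊤ ≃* G ⧸ N :=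
  congr _ N Subgroup.topEquiv <| by
    ext x
    simp [Subgroup.mem_subgroupOf]

end QuotientGroup

namespace Subgroup

variable {G H : Type*} [Group G] [Group H]

theorem surjective_fst_comp_subtype {I : Subgroup (G × H)} (hI : I.map (MonoidHom.fst G H) = ⊤) :
    Surjective (Prod.fst ∘ I.subtype) := fun g => by
  obtain ⟨x, hx, rfl⟩ := mem_map.mp (hI ▸ mem_top g)
  exact ⟨⟨x, hx⟩, rfl⟩

theorem surjective_snd_comp_subtype {I : Subgroup (G × H)} (hI : I.map (MonoidHom.snd G H) = ⊤) :
    Surjective (Prod.snd ∘ I.subtype) := fun h => by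
  obtain ⟨x, hx, rfl⟩ := mem_map.mp (hI ▸ mem_top h)
  exact ⟨⟨x, hx⟩, rfl⟩

theorem map_fst_closure_pair (g₁ g₂ : G) (h₁ h₂ : H) :
    (closure {(g₁, h₁), (g₂, h₂)}).map (MonoidHom.fst G H) = closure {g₁, g₂} := by
  rw [MonoidHom.map_closure, Set.image_pair]
  rfl

theorem map_snd_closure_pair (g₁ g₂ : G) (h₁ h₂ : H) :
    (closure {(g₁, h₁), (g₂, h₂)}).map (MonoidHom.snd G H) = closure {h₁, h₂} := by
  rw [MonoidHom.map_closure, Set.image_pair]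
  rfl

theorem eq_top_of_surjective_of_quotient_equiv_eq_top {I : Subgroup (G × H)}
    (hI₁ : Surjective (Prod.fst ∘ I.subtype)) (hI₂ : Surjective (Prod.snd ∘ I.subtype))
    (hGH : ∀ (N : Subgroup G) (M : Subgroup H) [N.Normal] [M.Normal], (G ⧸ N ≃* H ⧸ M) → N = ⊤) :
    I = ⊤ := by
  have := normal_goursatFst hI₁
  have := normal_goursatSnd hI₂
  obtain ⟨e, -⟩ := goursat_surjective hI₁ hI₂
  have hFst : I.goursatFst = ⊤ := hGH _ _ e
  have hSnd : I.goursatSnd = ⊤ := by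
    have : Subsingleton (G ⧸ I.goursatFst) := QuotientGroup.subsingleton_iff.mpr hFst
    exact QuotientGroup.subsingleton_iff.mp e.symm.toEquiv.subsingleton
  rw [eq_top_iff, ← top_prod_top, ← hFst, ← hSnd]
  exact goursatFst_prod_goursatSnd_le I

end Subgroup

theorem stmt_3_general (G H : Type*) [Group G] [Group H]
    (hsq : ∀ (A : Subgroup G) (B : Subgroup H) (NA : Subgroup A) (NB : Subgroup B)
      [NA.Normal] [NB.Normal], Nontrivial (A ⧸ NA) → IsEmpty ((A ⧸ NA) ≃* (B ⧸ NB)))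
    (g₁ g₂ : G) (h₁ h₂ : H)
    (hg : Subgroup.closure {g₁, g₂} = ⊤) (hh : Subgroup.closure {h₁, h₂} = ⊤) :
    Subgroup.closure {(g₁, h₁), (g₂, h₂)} = ⊤ := by
  refine Subgroup.eq_top_of_surjective_of_quotient_equiv_eq_top
    (Subgroup.surjective_fst_comp_subtype (by rw [Subgroup.map_fst_closure_pair, hg]))
    (Subgroup.surjective_snd_comp_subtype (by rw [Subgroup.map_snd_closure_pair, hh]))
    fun N M _ _ e => ?_
  by_contra hN
  have eG := QuotientGroup.quotientSubgroupOfTopEquiv N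
  have eH := QuotientGroup.quotientSubgroupOfTopEquiv M
  have : Nontrivial ((⊤ : Subgroup G) ⧸ N.subgroupOf ⊤) :=
    eG.toEquiv.nontrivial_congr.mpr (QuotientGroup.nontrivial_iff.mpr hN)
  exact (hsq ⊤ ⊤ _ _ this).false (eG.trans (e.trans eH.symm))

theorem stmt_3 (G H : Type*) [Group G] [Group H] [Finite G] [Finite H]
    (hsq : ∀ (A : Subgroup G) (B : Subgroup H) (NA : Subgroup A) (NB : Subgroup B)
      [NA.Normal] [NB.Normal], Nontrivial (A ⧸ NA) → IsEmpty ((A ⧸ NA) ≃* (B ⧸ NB)))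
    (g₁ g₂ : G) (h₁ h₂ : H)
    (hg : Subgroup.closure {g₁, g₂} = ⊤) (hh : Subgroup.closure {h₁, h₂} = ⊤) :
    Subgroup.closure {(g₁, h₁), (g₂, h₂)} = ⊤ :=
  stmt_3_general G H hsq g₁ g₂ h₁ h₂ hg hh
end

section
/- Let p be a prime and G be a finite nilpotent group whose Sylow p-subgroup is noncyclic but 2-generated. Then the number of elements g ∈ G such that there exists h ∈ G with ⟨g,h⟩ = G is at most |G|(1 - 1/p²). -/
open SimpleGraph

/-!
Since `G` is nilpotent, it maps onto its Sylow `p`-subgroup `P`. If `⟨g, h⟩ = G`, the images of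
`g` and `h` generate `P`, so the image of `g` lies outside the Frattini subgroup `Φ(P)`: otherwise
the image of `h` alone would generate `P`, which is not cyclic. Hence such `g` avoid the preimage
of `Φ(P)`, a subgroup of index `|P : Φ(P)|`. This index is at most `p²`, because `Φ(P)` contains
`P^p [P, P]` and `P / P^p [P, P]` is abelian of exponent `p` on two generators.
-/

open Subgroup
open scoped commutatorElement Pointwise

theorem closure_pair_eq_top_of_surjective {G H : Type*} [Group G] [Group H] {f : G →* H}
    (hf : Function.Surjective f) {x y : G} (h : closure {x, y} = ⊤) :
    closure {f x, f y} = ⊤ := by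
  rw [← Set.image_pair, ← MonoidHom.map_closure, h, map_top_of_surjective _ hf]

theorem card_le_orderOf_mul_orderOf {Q : Type*} [Group Q] (hQ : ∀ a b : Q, Commute a b)
    {x y : Q} (h : closure {x, y} = ⊤) : Nat.card Q ≤ orderOf x * orderOf y := by
  have : (zpowers y).Normal := ⟨fun n _ g => by rwa [(hQ g n).eq, mul_inv_cancel_right]⟩
  have hsup : zpowers x ⊔ zpowers y = ⊤ := by
    rw [zpowers_eq_closure, zpowers_eq_closure, ← Subgroup.closure_union, Set.singleton_union, h]
  calc Nat.card Q = Nat.card ((zpowers x ⊔ zpowers y : Subgroup Q) : Set Q) := by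
        rw [hsup, coe_top, Nat.card_univ]
    _ = Nat.card ((zpowers x : Set Q) * (zpowers y : Set Q)) := by rw [mul_normal]
    _ ≤ Nat.card (zpowers x) * Nat.card (zpowers y) := Set.natCard_mul_le
    _ = orderOf x * orderOf y := by rw [Nat.card_zpowers, Nat.card_zpowers]

theorem zpowers_eq_top_of_closure_pair_eq_top {H : Type*} [Group H] [Finite H] {x y : H}
    (h : closure {x, y} = ⊤) (hx : x ∈ frattini H) : zpowers y = ⊤ := by
  refine frattini_nongenerating (top_le_iff.mp (h ▸ closure_le _ |>.mpr ?_))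
  rintro _ (rfl | rfl)
  · exact mem_sup_right hx
  · exact mem_sup_left (mem_zpowers _)

theorem Subgroup.card_compl_mul_le {G : Type*} [Group G] [Finite G] (K : Subgroup G) {n : ℕ}
    (hn : K.index ≤ n) : Nat.card ((K : Set G)ᶜ : Set G) * n ≤ Nat.card G * (n - 1) := by
  have hcompl : Nat.card ((K : Set G)ᶜ : Set G) + Nat.card K = Nat.card G := by
    rw [Nat.card_coe_set_eq]
    exact Set.ncard_compl_add_ncard (K : Set G)
  obtain ⟨d, rfl⟩ := Nat.exists_eq_add_of_le hn
  obtain ⟨j, hj⟩ := Nat.exists_eq_add_one.mpr (Nat.pos_of_ne_zero K.index_ne_zero_of_finite)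
  rw [← K.card_mul_index, hj] at hcompl ⊢
  have hcard : Nat.card ((K : Set G)ᶜ : Set G) = Nat.card K * j := by
    rw [mul_add, mul_one] at hcompl; omega
  rw [hcard, show j + 1 + d - 1 = j + d by omega]
  nlinarith [Nat.zero_le (Nat.card K * d)]

def powCommutatorSubgroup (p : ℕ) (H : Type*) [Group H] : Subgroup H :=
  normalClosure (commutatorSet H ∪ Set.range (· ^ p : H → H))

instance (p : ℕ) (H : Type*) [Group H] : (powCommutatorSubgroup p H).Normal :=
  normalClosure_normal

theorem card_quotient_powCommutatorSubgroup_le {p : ℕ} (hp : 0 < p) {H : Type*} [Group H]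
    {x y : H} (h : closure {x, y} = ⊤) : Nat.card (H ⧸ powCommutatorSubgroup p H) ≤ p ^ 2 := by
  set M := powCommutatorSubgroup p H
  have hcomm : ∀ a b : H ⧸ M, Commute a b := by
    intro a b
    obtain ⟨a, rfl⟩ := QuotientGroup.mk_surjective a
    obtain ⟨b, rfl⟩ := QuotientGroup.mk_surjective b
    rw [← commutatorElement_eq_one_iff_commute]
    exact (QuotientGroup.eq_one_iff ⁅a, b⁆).mpr
      (subset_normalClosure (Or.inl (commutator_mem_commutatorSet a b)))
  have hord : ∀ a : H ⧸ M, orderOf a ≤ p := by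
    intro a
    obtain ⟨a, rfl⟩ := QuotientGroup.mk_surjective a
    exact orderOf_le_of_pow_eq_one hp ((QuotientGroup.eq_one_iff (a ^ p)).mpr
      (subset_normalClosure (Or.inr ⟨a, rfl⟩)))
  have hgen : closure {(x : H ⧸ M), (y : H ⧸ M)} = ⊤ :=
    closure_pair_eq_top_of_surjective (QuotientGroup.mk'_surjective M) h
  calc Nat.card (H ⧸ M) ≤ orderOf (x : H ⧸ M) * orderOf (y : H ⧸ M) :=
        card_le_orderOf_mul_orderOf hcomm hgen
    _ ≤ p ^ 2 := by rw [sq]; exact Nat.mul_le_mul (hord _) (hord _)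

section PGroup

variable {p : ℕ} [Fact p.Prime] {H : Type*} [Group H] [Finite H]

theorem IsPGroup.card_quotient_of_isCoatom (hH : IsPGroup p H) {K : Subgroup H} [K.Normal]
    (hK : IsCoatom K) : Nat.card (H ⧸ K) = p := by
  have hsimple : ∀ A : Subgroup (H ⧸ K), A = ⊥ ∨ A = ⊤ := by
    intro A
    rw [← map_comap_eq_self_of_surjective (QuotientGroup.mk'_surjective K) A]
    rcases hK.le_iff.mp (QuotientGroup.le_comap_mk' K A) with h | h <;> rw [h]
    · exact .inr (map_top_of_surjective _ (QuotientGroup.mk'_surjective K))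
    · exact .inl (QuotientGroup.map_mk'_self K)
  have : Nontrivial (H ⧸ K) := QuotientGroup.nontrivial_iff.mpr hK.1
  -- an element of order `p` (Cauchy) generates `H ⧸ K`, as `H ⧸ K` has no proper subgroup
  obtain ⟨x, hx⟩ := exists_prime_orderOf_dvd_card' p
    (((hH.to_quotient K).card_eq_or_dvd).resolve_left Finite.one_lt_card.ne')
  have hx1 : x ≠ 1 := by
    rintro rfl; exact (Fact.out : p.Prime).one_lt.ne (by simpa using hx)
  rcases hsimple (zpowers x) with h | h
  · exact absurd (zpowers_eq_bot.mp h) hx1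
  · rw [← hx, ← Nat.card_zpowers, h, card_top]

theorem IsPGroup.powCommutatorSubgroup_le_of_isCoatom (hH : IsPGroup p H) {K : Subgroup H}
    (hK : IsCoatom K) : powCommutatorSubgroup p H ≤ K := by
  have hmax := (Group.isNilpotent_of_finite_tfae (G := H)).out 0 2
  have : K.Normal := hmax.mp hH.isNilpotent K hK
  have : IsCyclic (H ⧸ K) := isCyclic_of_prime_card (hH.card_quotient_of_isCoatom hK)
  let _ : CommGroup (H ⧸ K) := IsCyclic.commGroup
  refine normalClosure_le_normal ?_
  rintro _ (⟨a, b, rfl⟩ | ⟨a, rfl⟩) <;> rw [SetLike.mem_coe, ← QuotientGroup.eq_one_iff]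
  · rw [← QuotientGroup.mk'_apply, map_commutatorElement, commutatorElement_eq_one_iff_commute]
    exact Commute.all _ _
  · rw [QuotientGroup.mk_pow, ← hH.card_quotient_of_isCoatom hK]
    exact pow_card_eq_one'

theorem IsPGroup.powCommutatorSubgroup_le_frattini (hH : IsPGroup p H) :
    powCommutatorSubgroup p H ≤ frattini H :=
  le_iInf₂ fun _ hK => hH.powCommutatorSubgroup_le_of_isCoatom hK

theorem IsPGroup.index_frattini_le (hH : IsPGroup p H) {x y : H} (h : closure {x, y} = ⊤) :
    (frattini H).index ≤ p ^ 2 :=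
  (Nat.le_of_dvd (Nat.pos_of_ne_zero index_ne_zero_of_finite)
    (index_dvd_of_le hH.powCommutatorSubgroup_le_frattini)).trans
    (card_quotient_powCommutatorSubgroup_le (Fact.out : p.Prime).pos h)

end PGroup

def pairGenerators (G : Type*) [Group G] : Set G := {g | ∃ h, closure {g, h} = ⊤}

theorem MonoidHom.map_mem_pairGenerators {G H : Type*} [Group G] [Group H] {f : G →* H}
    (hf : Function.Surjective f) {g : G} (hg : g ∈ pairGenerators G) :
    f g ∈ pairGenerators H :=
  let ⟨h, hgh⟩ := hg; ⟨f h, closure_pair_eq_top_of_surjective hf hgh⟩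

theorem notMem_frattini_of_mem_pairGenerators {H : Type*} [Group H] [Finite H]
    (hH : ¬IsCyclic H) {x : H} (hx : x ∈ pairGenerators H) : x ∉ frattini H := fun hΦ =>
  let ⟨y, hxy⟩ := hx
  hH (isCyclic_iff_exists_zpowers_eq_top.mpr ⟨y, zpowers_eq_top_of_closure_pair_eq_top hxy hΦ⟩)

theorem card_pairGenerators_mul_le {G H : Type*} [Group G] [Group H] [Finite G] {p : ℕ}
    [Fact p.Prime] {f : G →* H} (hf : Function.Surjective f) (hH : IsPGroup p H)
    (hcyc : ¬IsCyclic H) (h2 : TwoGenerated H) :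
    Nat.card (pairGenerators G) * p ^ 2 ≤ Nat.card G * (p ^ 2 - 1) := by
  have := Finite.of_surjective f hf
  obtain ⟨x, y, hxy⟩ := h2
  have hsub : pairGenerators G ⊆ ((frattini H).comap f : Set G)ᶜ := fun g hg =>
    notMem_frattini_of_mem_pairGenerators hcyc (f.map_mem_pairGenerators hf hg)
  calc Nat.card (pairGenerators G) * p ^ 2
      ≤ Nat.card (((frattini H).comap f : Set G)ᶜ : Set G) * p ^ 2 :=
        Nat.mul_le_mul_right _ (Nat.card_mono (Set.toFinite _) hsub)
    _ ≤ Nat.card G * (p ^ 2 - 1) := card_compl_mul_le _ <| by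
        rw [index_comap_of_surjective _ hf]; exact hH.index_frattini_le hxy

theorem Sylow.exists_surjective_of_isNilpotent {G : Type*} [Group G] [Finite G]
    [Group.IsNilpotent G] {p : ℕ} [Fact p.Prime] (P : Sylow p G) :
    ∃ π : G →* P, Function.Surjective π := by
  by_cases hp : p ∈ (Nat.card G).primeFactors
  · let e := directProductOfNormal (G := G) fun _ => inferInstance
    refine ⟨(Pi.evalMonoidHom _ P).comp ((Pi.evalMonoidHom _ ⟨p, hp⟩).comp e.symm.toMonoidHom),
      ?_⟩
    exact (Function.surjective_eval (β := fun Q : Sylow p G => (Q : Subgroup G)) P).comp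
      ((Function.surjective_eval (β := fun q : (Nat.card G).primeFactors =>
        ∀ Q : Sylow q G, (Q : Subgroup G)) ⟨p, hp⟩).comp e.symm.surjective)
  · have : Subsingleton P := by
      refine (Nat.card_eq_one_iff_unique.mp ?_).1
      rw [P.card_eq_multiplicity, Finsupp.notMem_support_iff.mp (by rwa [Nat.support_factorization]),
        pow_zero]
    exact ⟨1, fun y => ⟨1, Subsingleton.elim _ _⟩⟩

theorem stmt_6 (p : ℕ) [Fact p.Prime] (G : Type*) [Group G] [Finite G]
    (hnil : Group.IsNilpotent G) (P : Sylow p G)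
    (hnc : ¬ IsCyclic (P : Subgroup G)) (h2P : TwoGenerated (P : Subgroup G)) :
    Nat.card {g : G | ∃ h : G, Subgroup.closure {g, h} = ⊤} * p ^ 2
      ≤ Nat.card G * (p ^ 2 - 1) := by
  obtain ⟨π, hπ⟩ := P.exists_surjective_of_isNilpotent
  exact card_pairGenerators_mul_le hπ P.isPGroup' hnc h2P
end

section
/- Let p be a prime and G = C_p × C_p. Then the vertex connectivity of Δ(G) equals p² − p, which is the minimal degree of Δ(G). -/
open SimpleGraph

open scoped Classical in
/-- The vertex connectivity of a finite graph: the least number of vertices whose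
removal disconnects the graph, with `κ(K_n) = n - 1`. -/
noncomputable def vertexConnectivity {V : Type*} [Fintype V] (Γ : SimpleGraph V) : ℕ :=
  if Γ = ⊤ then Fintype.card V - 1
  else sInf {n | ∃ X : Set V, X.ncard = n ∧ ¬ (Γ.induce Xᶜ).Connected}

/-! In `C_p × C_p` every nontrivial element has order `p`, so `g, h` generate the group iff
`g ≠ 1` and `h ∉ ⟨g⟩`. Hence `Δ(G)` is the complete multipartite graph whose parts are the `p + 1`
cyclic subgroups of order `p` with the identity removed, and it is regular of degree `p² - p`.
In a complete multipartite graph, deleting fewer than `δ` vertices leaves it connected, since two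
non-adjacent survivors lie in one part and so share a surviving neighbour; deleting the
neighbourhood of a vertex of minimal degree isolates it. So `κ = δ`. -/

namespace SimpleGraph

variable {V : Type*} (Γ : SimpleGraph V)

lemma ncard_neighborSet_eq_degree (v : V) [Fintype (Γ.neighborSet v)] :
    (Γ.neighborSet v).ncard = Γ.degree v := by
  rw [← card_neighborSet_eq_degree, ← Nat.card_coe_set_eq, Nat.card_eq_fintype_card]

lemma not_connected_induce_compl_neighborSet {u v : V} (huv : Γᶜ.Adj u v) :
    ¬(Γ.induce (Γ.neighborSet u)ᶜ).Connected := by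
  intro hconn
  obtain ⟨walk⟩ := hconn.preconnected ⟨u, Γ.irrefl⟩ ⟨v, huv.2⟩
  obtain ⟨w, hw, -⟩ := walk.exists_eq_cons_of_ne fun h => huv.1 (congrArg Subtype.val h)
  exact w.2 hw

lemma exists_degree_eq_minDegree_compl_adj [Fintype V] [DecidableRel Γ.Adj] (hΓ : Γ ≠ ⊤) :
    ∃ u v, Γ.degree u = Γ.minDegree ∧ Γᶜ.Adj u v := by
  classical
  obtain ⟨a, b, hab⟩ := ne_top_iff_exists_not_adj.1 hΓ
  have : Nonempty V := ⟨a⟩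
  obtain ⟨u, hu⟩ := Γ.exists_minimal_degree_vertex
  -- a vertex of minimal degree has at least as many non-neighbours as `a`
  have : 0 < Γᶜ.degree u := by
    have ha := Γᶜ.degree_pos_iff_exists_adj a |>.2 ⟨b, hab⟩
    have := hu ▸ Γ.minDegree_le_degree a
    rw [degree_compl] at ha ⊢
    omega
  obtain ⟨v, huv⟩ := (Γᶜ.degree_pos_iff_exists_adj u).1 this
  exact ⟨u, v, hu.symm, huv⟩

lemma exists_adj_notMem_of_ncard_lt_minDegree [Fintype V] [DecidableRel Γ.Adj] {X : Set V}
    (hX : X.ncard < Γ.minDegree) (a : V) : ∃ w ∉ X, Γ.Adj a w := by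
  by_contra! h
  have := Set.ncard_le_ncard (fun w hw => not_not.1 fun hwX => h w hwX hw : Γ.neighborSet a ⊆ X)
  have := Γ.minDegree_le_degree a
  rw [ncard_neighborSet_eq_degree] at *
  omega

variable {Γ} in
lemma IsCompleteMultipartite.connected_induce_compl_of_ncard_lt [Fintype V] [DecidableRel Γ.Adj]
    (hΓ : Γ.IsCompleteMultipartite) {X : Set V} (hX : X.ncard < Γ.minDegree) :
    (Γ.induce Xᶜ).Connected := by
  have hout := Γ.exists_adj_notMem_of_ncard_lt_minDegree hX
  rcases isEmpty_or_nonempty V with hV | hV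
  · simp at hX
  obtain ⟨a⟩ := hV
  obtain ⟨w, hw, -⟩ := hout a
  have : Nonempty ↥Xᶜ := ⟨⟨w, hw⟩⟩
  refine ⟨fun a b => ?_⟩
  by_cases hab : Γ.Adj a b
  · exact Adj.reachable hab
  obtain ⟨w, hwX, haw⟩ := hout a
  have hbw : Γ.Adj b w := not_not.1 fun hbw => hΓ.trans _ _ _ hab hbw haw
  exact (Adj.reachable (G := Γ.induce Xᶜ) (v := ⟨w, hwX⟩) haw).trans (Adj.reachable hbw.symm)

variable {Γ} in
theorem IsCompleteMultipartite.vertexConnectivity_eq_minDegree [Fintype V] [DecidableRel Γ.Adj]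
    (hΓ : Γ.IsCompleteMultipartite) : vertexConnectivity Γ = Γ.minDegree := by
  unfold vertexConnectivity
  split_ifs with htop
  · classical
    subst htop
    convert (minDegree_top (V := V)).symm
  obtain ⟨u, v, hu, huv⟩ := Γ.exists_degree_eq_minDegree_compl_adj htop
  have hmem : Γ.minDegree ∈ {n | ∃ X : Set V, X.ncard = n ∧ ¬(Γ.induce Xᶜ).Connected} :=
    ⟨Γ.neighborSet u, by rw [ncard_neighborSet_eq_degree, hu],
      Γ.not_connected_induce_compl_neighborSet huv⟩
  refine le_antisymm (Nat.sInf_le hmem) (le_csInf ⟨_, hmem⟩ ?_)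
  rintro _ ⟨X, rfl, hX⟩
  exact not_lt.1 fun h => hX (hΓ.connected_induce_compl_of_ncard_lt h)

end SimpleGraph

namespace Subgroup

variable {G : Type*} [Group G] {p : ℕ} [Fact p.Prime]

lemma card_zpowers_of_ne_one (hexp : ∀ g : G, g ^ p = 1) {g : G} (hg : g ≠ 1) :
    Nat.card (zpowers g) = p := by
  rw [Nat.card_zpowers, orderOf_eq_prime (hexp g) hg]

lemma zpowers_ne_top (hcard : Nat.card G = p ^ 2) (hexp : ∀ g : G, g ^ p = 1) (k : G) :
    zpowers k ≠ ⊤ := by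
  intro htop
  have hle : orderOf k ≤ p := orderOf_le_of_pow_eq_one (Fact.out : p.Prime).pos (hexp k)
  rw [← Nat.card_zpowers, htop, card_top, hcard] at hle
  nlinarith [(Fact.out : p.Prime).two_le]

lemma zpowers_eq_of_mem_zpowers (hexp : ∀ g : G, g ^ p = 1) {g h : G} (hg : g ≠ 1) (hh : h ≠ 1)
    (hmem : h ∈ zpowers g) : zpowers h = zpowers g :=
  have : Finite (zpowers g) := Nat.finite_of_card_ne_zero
    (card_zpowers_of_ne_one hexp hg ▸ (Fact.out : p.Prime).ne_zero)
  eq_of_le_of_card_ge (zpowers_le.2 hmem) <| by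
    rw [card_zpowers_of_ne_one hexp hg, card_zpowers_of_ne_one hexp hh]

lemma closure_pair_eq_top_iff (hcard : Nat.card G = p ^ 2) (hexp : ∀ g : G, g ^ p = 1) (g h : G) :
    closure {g, h} = ⊤ ↔ g ≠ 1 ∧ h ∉ zpowers g := by
  have : Finite G := Nat.finite_of_card_ne_zero (hcard ▸ pow_ne_zero 2 (Fact.out : p.Prime).ne_zero)
  constructor
  · intro htop
    refine ⟨fun hg => zpowers_ne_top hcard hexp h ?_, fun hh => zpowers_ne_top hcard hexp g ?_⟩
    · exact eq_top_iff.2 (htop ▸ (closure_le _).2 (by simp [Set.insert_subset_iff, hg]))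
    · exact eq_top_iff.2 (htop ▸ (closure_le _).2 (by simp [Set.insert_subset_iff, hh]))
  · rintro ⟨hg, hh⟩
    set H := closure ({g, h} : Set G)
    have hgH : zpowers g ≤ H := zpowers_le.2 (subset_closure (by simp))
    have hindex : (zpowers g).index = p := by
      have := card_mul_index (zpowers g)
      rw [card_zpowers_of_ne_one hexp hg, hcard, sq] at this
      exact Nat.eq_of_mul_eq_mul_left (Fact.out : p.Prime).pos this
    have hlt : H.index < p := hindex ▸ index_strictAnti
      (SetLike.lt_iff_le_and_exists.2 ⟨hgH, h, subset_closure (by simp), hh⟩)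
    rcases (Nat.dvd_prime Fact.out).1 (hindex ▸ index_dvd_of_le hgH) with h1 | hp
    · exact index_eq_one.1 h1
    · omega

end Subgroup

section GeneratingGraph

open Subgroup

variable {G : Type*} [Group G] {p : ℕ} [Fact p.Prime]

lemma genGraph_adj_iff (hcard : Nat.card G = p ^ 2) (hexp : ∀ g : G, g ^ p = 1) {g h : G} :
    (genGraph G).Adj g h ↔ g ≠ 1 ∧ h ∉ zpowers g :=
  (and_congr_right' (closure_pair_eq_top_iff hcard hexp g h)).trans <|
    and_iff_right_of_imp fun ⟨_, hh⟩ hgh => hh (hgh ▸ mem_zpowers g)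

lemma mem_nonIso_iff (hcard : Nat.card G = p ^ 2) (hexp : ∀ g : G, g ^ p = 1) {g : G} :
    g ∈ nonIso G ↔ g ≠ 1 := by
  refine ⟨fun ⟨_, hadj⟩ => ((genGraph_adj_iff hcard hexp).1 hadj).1, fun hg => ?_⟩
  obtain ⟨h, hh⟩ : ∃ h, h ∉ zpowers g := by
    by_contra! h
    exact zpowers_ne_top hcard hexp g (eq_top_iff' _ |>.2 h)
  exact ⟨h, (genGraph_adj_iff hcard hexp).2 ⟨hg, hh⟩⟩

lemma deltaGraph_adj_iff (hcard : Nat.card G = p ^ 2) (hexp : ∀ g : G, g ^ p = 1)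
    {u v : nonIso G} : (deltaGraph G).Adj u v ↔ (v : G) ∉ zpowers (u : G) :=
  (genGraph_adj_iff hcard hexp).trans <|
    and_iff_right ((mem_nonIso_iff hcard hexp).1 u.2)

lemma isCompleteMultipartite_deltaGraph (hcard : Nat.card G = p ^ 2)
    (hexp : ∀ g : G, g ^ p = 1) : (deltaGraph G).IsCompleteMultipartite := by
  refine ⟨fun a b c hab hbc => ?_⟩
  simp only [deltaGraph_adj_iff hcard hexp, not_not] at *
  have hne (x : nonIso G) : (x : G) ≠ 1 := (mem_nonIso_iff hcard hexp).1 x.2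
  rwa [← zpowers_eq_of_mem_zpowers hexp (hne a) (hne b) hab]

lemma isRegularOfDegree_deltaGraph (hcard : Nat.card G = p ^ 2) (hexp : ∀ g : G, g ^ p = 1)
    [(deltaGraph G).LocallyFinite] : (deltaGraph G).IsRegularOfDegree (p ^ 2 - p) := by
  intro u
  have : Finite G := Nat.finite_of_card_ne_zero (hcard ▸ pow_ne_zero 2 (Fact.out : p.Prime).ne_zero)
  have himage : Subtype.val '' (deltaGraph G).neighborSet u = (zpowers (u : G) : Set G)ᶜ := by
    ext v
    refine ⟨fun ⟨v, hv, hvv⟩ => hvv ▸ (deltaGraph_adj_iff hcard hexp).1 hv, fun hv => ?_⟩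
    have hv1 : v ∈ nonIso G := (mem_nonIso_iff hcard hexp).2 fun h1 => hv (h1 ▸ one_mem _)
    exact ⟨⟨v, hv1⟩, (deltaGraph_adj_iff hcard hexp).2 hv, rfl⟩
  rw [← ncard_neighborSet_eq_degree, ← Set.ncard_image_of_injective _ Subtype.val_injective,
    himage, Set.ncard_compl, ← Nat.card_coe_set_eq, SetLike.coe_sort_coe,
    card_zpowers_of_ne_one hexp ((mem_nonIso_iff hcard hexp).1 u.2), hcard]

end GeneratingGraph

open scoped Classical in
theorem stmt_9 (p : ℕ) [Fact p.Prime] :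
    vertexConnectivity (deltaGraph (Multiplicative (ZMod p × ZMod p))) = p ^ 2 - p ∧
    (deltaGraph (Multiplicative (ZMod p × ZMod p))).minDegree = p ^ 2 - p := by
  set G := Multiplicative (ZMod p × ZMod p)
  have hcard : Nat.card G = p ^ 2 := by simp [G, Nat.card_eq_fintype_card, ZMod.card, sq]
  have hexp (g : G) : g ^ p = 1 := by
    change p • Multiplicative.toAdd g = 0
    ext <;> simp
  have : Nonempty (nonIso G) := by
    have : Nontrivial G := Finite.one_lt_card_iff_nontrivial.1
      (hcard ▸ Nat.one_lt_pow two_ne_zero (Fact.out : p.Prime).one_lt)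
    obtain ⟨g, hg⟩ := exists_ne (1 : G)
    exact ⟨⟨g, (mem_nonIso_iff hcard hexp).2 hg⟩⟩
  have hmin := (isRegularOfDegree_deltaGraph hcard hexp).minDegree_eq
  exact ⟨(isCompleteMultipartite_deltaGraph hcard hexp).vertexConnectivity_eq_minDegree.trans hmin,
    hmin⟩
end

section
/- Let p be a prime, n ≥ 1 coprime to p, and G = C_n × C_p × C_p. Then the vertex connectivity of Δ(G) equals φ(|G|) = φ(n)·(p² − p), which is the minimal degree of Δ(G). -/
open SimpleGraph

/-!
Write `g ∈ C_n × C_p²` as `(x, v)` with `x ∈ ℤ/n` and `v ∈ 𝔽_p²`. Since `n` and `p` are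
coprime, `g, h` generate `G` iff `x_g, x_h` generate `ℤ/n` and `v_g, v_h` span `𝔽_p²`. Hence
`g` is non-isolated iff `v_g ≠ 0`, and `u` is adjacent to every `(y, w)` with `y` a unit and
`w ∉ 𝔽_p v_u`: these are `φ(n)(p² - p)` vertices, and when `x_u = 0` they are all the
neighbours of `u`, which gives the minimal degree. After removing fewer vertices than that,
every vertex keeps such a neighbour, and two vertices with unit first coordinate are adjacent
unless their second coordinates span the same line, in which case they share those neighbours;
so the rest stays connected. Removing the neighbourhood of a vertex of minimal degree separates
it from a non-neighbour, which exists unless `Δ` is complete, where `κ = δ = |Δ| - 1` anyway.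
-/

namespace SimpleGraph

variable {V : Type*} {G : SimpleGraph V}

theorem not_connected_induce_compl_neighborSet_s10 {u w : V} (hwu : w ≠ u) (hadj : ¬ G.Adj u w) :
    ¬ (G.induce (G.neighborSet u)ᶜ).Connected := by
  intro hconn
  have hu : u ∈ (G.neighborSet u)ᶜ := G.irrefl
  have hw : w ∈ (G.neighborSet u)ᶜ := hadj
  obtain ⟨walk⟩ := hconn.preconnected ⟨u, hu⟩ ⟨w, hw⟩
  have hnil : ¬ walk.Nil := Walk.not_nil_of_ne fun h => hwu (congrArg Subtype.val h).symm
  exact (walk.getVert 1).prop (walk.adj_snd hnil)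

theorem connected_induce_compl_of_ncard_lt [Finite V] [Nonempty V] (S : V → Set V)
    (hS : ∀ a, S a ⊆ G.neighborSet a)
    (hjoin : ∀ a b, ∀ z ∈ S a, ∀ z' ∈ S b, G.Adj z z' ∨ S z ⊆ G.neighborSet z')
    {X : Set V} (hX : ∀ a, X.ncard < (S a).ncard) :
    (G.induce Xᶜ).Connected := by
  have hfree : ∀ a, ∃ z ∈ S a, z ∉ X := fun a => by
    by_contra! h
    exact (hX a).not_ge (Set.ncard_le_ncard h)
  have reach {a z : V} (ha : a ∉ X) (hz : z ∉ X) (h : G.Adj a z) :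
      (G.induce Xᶜ).Reachable ⟨a, ha⟩ ⟨z, hz⟩ :=
    Adj.reachable h
  rw [connected_iff]
  obtain ⟨a₀⟩ := ‹Nonempty V›
  obtain ⟨z₀, -, hz₀⟩ := hfree a₀
  refine ⟨fun ⟨a, ha⟩ ⟨b, hb⟩ => ?_, ⟨⟨z₀, hz₀⟩⟩⟩
  obtain ⟨z, hz, hzX⟩ := hfree a
  obtain ⟨z', hz', hz'X⟩ := hfree b
  suffices (G.induce Xᶜ).Reachable ⟨z, hzX⟩ ⟨z', hz'X⟩ from
    ((reach ha hzX (hS a hz)).trans this).trans (reach hb hz'X (hS b hz')).symm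
  rcases hjoin a b z hz z' hz' with hzz' | hsub
  · exact reach hzX hz'X hzz'
  · obtain ⟨w, hw, hwX⟩ := hfree z
    exact (reach hzX hwX (hS z hw)).trans (reach hz'X hwX (hsub hw)).symm

theorem exists_not_adj_of_minDegree_eq [Fintype V] [DecidableRel G.Adj] (hG : G ≠ ⊤) {u : V}
    (hu : G.minDegree = G.degree u) : ∃ w, w ≠ u ∧ ¬ G.Adj u w := by
  by_contra! h
  have hu_univ : G.degree u = Fintype.card V - 1 :=
    (G.degree_eq_card_sub_one u).mpr fun w hw => h w hw.symm
  refine hG (eq_top_iff.mpr fun v w hvw => ?_)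
  have : G.degree v = Fintype.card V - 1 := by
    have := G.minDegree_le_degree v
    have := G.degree_lt_card_verts v
    omega
  exact (G.degree_eq_card_sub_one v).mp this hvw

theorem ncard_neighborSet [Fintype V] [DecidableRel G.Adj] (u : V) :
    (G.neighborSet u).ncard = G.degree u := by
  rw [← Nat.card_coe_set_eq, Nat.card_eq_fintype_card, card_neighborSet_eq_degree]

end SimpleGraph

theorem vertexConnectivity_eq_minDegree {V : Type*} [Fintype V] [Nonempty V]
    {G : SimpleGraph V} [DecidableRel G.Adj]
    (hconn : ∀ X : Set V, X.ncard < G.minDegree → (G.induce Xᶜ).Connected) :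
    vertexConnectivity G = G.minDegree := by
  obtain ⟨u, hu⟩ := G.exists_minimal_degree_vertex
  unfold vertexConnectivity
  split_ifs with hG
  · subst hG
    rw [hu, eq_comm, degree_eq_card_sub_one]
    exact fun w hw => hw
  · obtain ⟨w, hwu, hadj⟩ := exists_not_adj_of_minDegree_eq hG hu
    have hcut : G.minDegree ∈ {n | ∃ X : Set V, X.ncard = n ∧ ¬ (G.induce Xᶜ).Connected} :=
      ⟨G.neighborSet u, by rw [ncard_neighborSet, hu],
        not_connected_induce_compl_neighborSet_s10 hwu hadj⟩
    refine le_antisymm (Nat.sInf_le hcut) (le_csInf ⟨_, hcut⟩ ?_)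
    rintro m ⟨X, rfl, hX⟩
    by_contra! h
    exact hX (hconn X h)

theorem Subgroup.closure_eq_top_iff_addSubgroup_closure {A : Type*} [AddGroup A]
    (S : Set (Multiplicative A)) :
    Subgroup.closure S = ⊤ ↔ AddSubgroup.closure (Multiplicative.ofAdd ⁻¹' S) = ⊤ := by
  rw [← Subgroup.toAddSubgroup'_closure, map_eq_top_iff]

namespace AddSubgroup

theorem inl_mem_of_map_fst_eq_top {A B : Type*} [AddGroup A] [AddGroup B]
    (hAB : (Nat.card A).Coprime (Nat.card B)) {H : AddSubgroup (A × B)}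
    (hH : H.map (AddMonoidHom.fst A B) = ⊤) (a : A) : (a, 0) ∈ H := by
  obtain ⟨⟨a', b'⟩, hmem, ha'⟩ := mem_map.mp (hH ▸ mem_top ((nsmulCoprime hAB).symm a))
  have : Nat.card B • ((a', b') : A × B) = (a, 0) := by
    ext
    · change Nat.card B • a' = a
      rw [show a' = _ from ha']
      exact (nsmulCoprime hAB).apply_symm_apply a
    · exact card_nsmul_eq_zero'
  exact this ▸ H.nsmul_mem hmem _

theorem inr_mem_of_map_snd_eq_top {A B : Type*} [AddGroup A] [AddGroup B]
    (hAB : (Nat.card A).Coprime (Nat.card B)) {H : AddSubgroup (A × B)}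
    (hH : H.map (AddMonoidHom.snd A B) = ⊤) (b : B) : (0, b) ∈ H := by
  obtain ⟨⟨a', b'⟩, hmem, hb'⟩ :=
    mem_map.mp (hH ▸ mem_top ((nsmulCoprime hAB.symm).symm b))
  have : Nat.card A • ((a', b') : A × B) = (0, b) := by
    ext
    · exact card_nsmul_eq_zero'
    · change Nat.card A • b' = b
      rw [show b' = _ from hb']
      exact (nsmulCoprime hAB.symm).apply_symm_apply b
  exact this ▸ H.nsmul_mem hmem _

theorem closure_prod_eq_top_iff {A B : Type*} [AddGroup A] [AddGroup B]
    (hAB : (Nat.card A).Coprime (Nat.card B)) (S : Set (A × B)) :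
    closure S = ⊤ ↔ closure (Prod.fst '' S) = ⊤ ∧ closure (Prod.snd '' S) = ⊤ := by
  have hfst := (AddMonoidHom.fst A B).map_closure S
  have hsnd := (AddMonoidHom.snd A B).map_closure S
  refine ⟨fun h => ?_, fun ⟨h₁, h₂⟩ => eq_top_iff.mpr fun ⟨a, b⟩ _ => ?_⟩
  · rw [h, map_top_of_surjective _ Prod.fst_surjective] at hfst
    rw [h, map_top_of_surjective _ Prod.snd_surjective] at hsnd
    exact ⟨hfst.symm, hsnd.symm⟩
  · rw [AddMonoidHom.coe_fst] at hfst
    rw [AddMonoidHom.coe_snd] at hsnd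
    rw [← add_zero a, ← zero_add b, ← Prod.mk_add_mk]
    exact add_mem (inl_mem_of_map_fst_eq_top hAB (hfst.trans h₁) a)
      (inr_mem_of_map_snd_eq_top hAB (hsnd.trans h₂) b)

theorem closure_eq_top_iff_span_eq_top {n : ℕ} {M : Type*} [AddCommGroup M] [Module (ZMod n) M]
    (s : Set M) : closure s = ⊤ ↔ Submodule.span (ZMod n) s = ⊤ := by
  have : toZModSubmodule n (closure s) = Submodule.span (ZMod n) s :=
    le_antisymm ((toZModSubmodule n).le_symm_apply.mp ((closure_le _).mpr Submodule.subset_span))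
      (Submodule.span_le.mpr subset_closure)
  rw [← this, map_eq_top_iff]

end AddSubgroup

namespace ZMod

theorem closure_singleton_eq_top_iff {n : ℕ} (y : ZMod n) :
    AddSubgroup.closure {y} = ⊤ ↔ IsUnit y := by
  refine ⟨fun h => ?_, fun hy => eq_top_iff.mpr fun t _ => ?_⟩
  · obtain ⟨k, hk⟩ := AddSubgroup.mem_closure_singleton.mp (h ▸ AddSubgroup.mem_top 1)
    rw [zsmul_eq_mul] at hk
    exact IsUnit.of_mul_eq_one_right _ hk
  · obtain ⟨c, hc⟩ := hy.exists_left_inv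
    obtain ⟨k, hk⟩ := intCast_surjective (t * c)
    refine AddSubgroup.mem_closure_singleton.mpr ⟨k, ?_⟩
    rw [zsmul_eq_mul, hk, mul_assoc, hc, mul_one]

theorem closure_pair_eq_top_of_isUnit {n : ℕ} (x : ZMod n) {y : ZMod n} (hy : IsUnit y) :
    AddSubgroup.closure {x, y} = ⊤ :=
  top_unique ((closure_singleton_eq_top_iff y).mpr hy ▸ AddSubgroup.closure_mono (by simp))

theorem closure_zero_pair_eq_top_iff {n : ℕ} (y : ZMod n) :
    AddSubgroup.closure {0, y} = ⊤ ↔ IsUnit y := by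
  rw [AddSubgroup.closure_insert_zero, closure_singleton_eq_top_iff]

theorem ncard_setOf_isUnit (n : ℕ) [NeZero n] : {x : ZMod n | IsUnit x}.ncard = n.totient := by
  rw [show {x : ZMod n | IsUnit x} = Set.range Units.val from rfl,
    Set.ncard_range_of_injective Units.val_injective, Nat.card_eq_fintype_card,
    ZMod.card_units_eq_totient]

end ZMod

section TwoDim

variable {K V : Type*} [Field K] [AddCommGroup V] [Module K V]

theorem span_singleton_ne_top_of_finrank_eq_two (hV : Module.finrank K V = 2) (v : V) :
    K ∙ v ≠ ⊤ := by
  intro h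
  have := finrank_span_le_card (R := K) ({v} : Set V)
  rw [h, finrank_top, hV] at this
  simp at this

theorem span_pair_eq_top_iff_of_finrank_eq_two (hV : Module.finrank K V = 2) {v : V} (hv : v ≠ 0)
    (w : V) : Submodule.span K {v, w} = ⊤ ↔ w ∉ K ∙ v := by
  have hle : K ∙ v ≤ Submodule.span K {v, w} := Submodule.span_mono (by simp)
  refine ⟨fun h hw => span_singleton_ne_top_of_finrank_eq_two hV v ?_, fun hw => ?_⟩
  · refine top_unique (h ▸ Submodule.span_le.mpr ?_)
    exact Set.insert_subset (Submodule.mem_span_singleton_self v) (Set.singleton_subset_iff.mpr hw)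
  · have : Module.Finite K V := Module.finite_of_finrank_pos (by omega)
    have hlt : K ∙ v < Submodule.span K {v, w} :=
      lt_of_le_of_ne hle fun h => hw (h ▸ Submodule.subset_span (by simp))
    have := Submodule.finrank_lt_finrank_of_lt hlt
    rw [finrank_span_singleton hv] at this
    exact Submodule.eq_top_of_finrank_eq (le_antisymm (Submodule.finrank_le _) (hV ▸ this))

theorem ncard_compl_span_singleton_of_finrank_eq_two [Finite K] (hV : Module.finrank K V = 2)
    {v : V} (hv : v ≠ 0) : ((K ∙ v : Set V)ᶜ).ncard = Nat.card K ^ 2 - Nat.card K := by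
  have : Module.Finite K V := Module.finite_of_finrank_pos (by omega)
  have : Finite V := Module.finite_of_finite K
  rw [Set.ncard_compl, ← Nat.card_coe_set_eq, SetLike.coe_sort_coe,
    Module.natCard_eq_pow_finrank (K := K) (V := V),
    Module.natCard_eq_pow_finrank (K := K) (V := K ∙ v), hV, finrank_span_singleton hv, pow_one]

end TwoDim

section CnCp2

open Multiplicative

abbrev CnCp2 (n p : ℕ) : Type := Multiplicative (ZMod n × ZMod p × ZMod p)

variable {n p : ℕ} [Fact p.Prime]

theorem finrank_zmod_prod_zmod : Module.finrank (ZMod p) (ZMod p × ZMod p) = 2 := by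
  rw [Module.finrank_prod, Module.finrank_self]

theorem genGraph_cnCp2_adj_iff (hcop : n.Coprime p) (g h : CnCp2 n p) :
    (genGraph (CnCp2 n p)).Adj g h ↔
      g ≠ h ∧ AddSubgroup.closure {(toAdd g).1, (toAdd h).1} = ⊤ ∧
        Submodule.span (ZMod p) {(toAdd g).2, (toAdd h).2} = ⊤ := by
  have hcard : (Nat.card (ZMod n)).Coprime (Nat.card (ZMod p × ZMod p)) := by
    rw [Nat.card_zmod, Nat.card_prod, Nat.card_zmod]
    exact hcop.mul_right hcop
  have hpre : ofAdd ⁻¹' {g, h} = {toAdd g, toAdd h} := by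
    ext; simp [← Equiv.eq_symm_apply]
  change g ≠ h ∧ Subgroup.closure {g, h} = ⊤ ↔ _
  rw [Subgroup.closure_eq_top_iff_addSubgroup_closure, hpre,
    AddSubgroup.closure_prod_eq_top_iff hcard, Set.image_pair, Set.image_pair,
    AddSubgroup.closure_eq_top_iff_span_eq_top (n := p) (M := ZMod p × ZMod p)]

theorem mem_nonIso_cnCp2_iff (hcop : n.Coprime p) (g : CnCp2 n p) :
    g ∈ nonIso (CnCp2 n p) ↔ (toAdd g).2 ≠ 0 := by
  refine ⟨fun ⟨h, hgh⟩ hg => ?_, fun hg => ?_⟩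
  · rw [genGraph_cnCp2_adj_iff hcop, hg, Submodule.span_insert_zero] at hgh
    exact span_singleton_ne_top_of_finrank_eq_two finrank_zmod_prod_zmod _ hgh.2.2
  · obtain ⟨w, hw⟩ : ∃ w, w ∉ ZMod p ∙ (toAdd g).2 := by
      by_contra! h
      exact span_singleton_ne_top_of_finrank_eq_two finrank_zmod_prod_zmod _
        (eq_top_iff.mpr fun w _ => h w)
    refine ⟨ofAdd (1, w), (genGraph_cnCp2_adj_iff hcop _ _).mpr ⟨?_, ?_, ?_⟩⟩
    · rintro rfl
      exact hw (Submodule.mem_span_singleton_self _)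
    · exact ZMod.closure_pair_eq_top_of_isUnit _ isUnit_one
    · exact (span_pair_eq_top_iff_of_finrank_eq_two finrank_zmod_prod_zmod hg w).mpr hw

theorem deltaGraph_cnCp2_adj_iff (hcop : n.Coprime p) (u z : nonIso (CnCp2 n p)) :
    (deltaGraph (CnCp2 n p)).Adj u z ↔
      AddSubgroup.closure {(toAdd u.1).1, (toAdd z.1).1} = ⊤ ∧
        (toAdd z.1).2 ∉ ZMod p ∙ (toAdd u.1).2 := by
  have hu := (mem_nonIso_cnCp2_iff hcop u.1).mp u.2
  change (genGraph _).Adj u.1 z.1 ↔ _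
  rw [genGraph_cnCp2_adj_iff hcop,
    span_pair_eq_top_iff_of_finrank_eq_two finrank_zmod_prod_zmod hu]
  refine ⟨fun h => h.2, fun h => ⟨?_, h⟩⟩
  intro huz
  exact h.2 (huz ▸ Submodule.mem_span_singleton_self _)

def unitNeighborSet (u : nonIso (CnCp2 n p)) : Set (nonIso (CnCp2 n p)) :=
  {z | IsUnit (toAdd z.1).1 ∧ (toAdd z.1).2 ∉ ZMod p ∙ (toAdd u.1).2}

theorem unitNeighborSet_subset_neighborSet (hcop : n.Coprime p) (u : nonIso (CnCp2 n p)) :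
    unitNeighborSet u ⊆ (deltaGraph (CnCp2 n p)).neighborSet u := fun z ⟨hz, hzu⟩ =>
  (deltaGraph_cnCp2_adj_iff hcop u z).mpr ⟨ZMod.closure_pair_eq_top_of_isUnit _ hz, hzu⟩

theorem neighborSet_eq_unitNeighborSet (hcop : n.Coprime p) {u : nonIso (CnCp2 n p)}
    (hu : (toAdd u.1).1 = 0) : (deltaGraph (CnCp2 n p)).neighborSet u = unitNeighborSet u := by
  ext z
  rw [mem_neighborSet, deltaGraph_cnCp2_adj_iff hcop, hu, ZMod.closure_zero_pair_eq_top_iff]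
  rfl

theorem ncard_unitNeighborSet [NeZero n] (hcop : n.Coprime p) (u : nonIso (CnCp2 n p)) :
    (unitNeighborSet u).ncard = n.totient * (p ^ 2 - p) := by
  have hu := (mem_nonIso_cnCp2_iff hcop u.1).mp u.2
  let coords : nonIso (CnCp2 n p) → ZMod n × ZMod p × ZMod p := fun z => toAdd z.1
  let T := {x : ZMod n | IsUnit x} ×ˢ (ZMod p ∙ (toAdd u.1).2 : Set (ZMod p × ZMod p))ᶜ
  have hcoords : coords.Injective := toAdd.injective.comp Subtype.val_injective
  have hrange : T ⊆ Set.range coords := fun ⟨x, w⟩ ⟨_, hw⟩ =>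
    ⟨⟨ofAdd (x, w), (mem_nonIso_cnCp2_iff hcop _).mpr fun h => hw (h ▸ Submodule.zero_mem _)⟩, rfl⟩
  change (coords ⁻¹' T).ncard = _
  rw [Set.ncard_preimage_of_injective_subset_range hcoords hrange, Set.ncard_prod,
    ZMod.ncard_setOf_isUnit,
    ncard_compl_span_singleton_of_finrank_eq_two finrank_zmod_prod_zmod hu, Nat.card_zmod]

theorem adj_or_unitNeighborSet_subset_neighborSet (hcop : n.Coprime p)
    {z z' : nonIso (CnCp2 n p)} (hz' : IsUnit (toAdd z'.1).1) :
    (deltaGraph (CnCp2 n p)).Adj z z' ∨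
      unitNeighborSet z ⊆ (deltaGraph (CnCp2 n p)).neighborSet z' := by
  by_cases h : (toAdd z'.1).2 ∈ ZMod p ∙ (toAdd z.1).2
  · refine .inr fun w ⟨hw, hwz⟩ => (deltaGraph_cnCp2_adj_iff hcop z' w).mpr
      ⟨ZMod.closure_pair_eq_top_of_isUnit _ hw, fun hwz' => hwz ?_⟩
    exact (Submodule.span_singleton_le_iff_mem _ _).mpr h hwz'
  · exact .inl ((deltaGraph_cnCp2_adj_iff hcop z z').mpr
      ⟨ZMod.closure_pair_eq_top_of_isUnit _ hz', h⟩)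

theorem exists_nonIso_cnCp2_fst_eq_zero (hcop : n.Coprime p) :
    ∃ u : nonIso (CnCp2 n p), (toAdd u.1).1 = 0 :=
  ⟨⟨ofAdd (0, 1, 0), (mem_nonIso_cnCp2_iff hcop _).mpr (by simp)⟩, rfl⟩

theorem nonempty_nonIso_cnCp2 (hcop : n.Coprime p) : Nonempty (nonIso (CnCp2 n p)) :=
  let ⟨u, _⟩ := exists_nonIso_cnCp2_fst_eq_zero hcop
  ⟨u⟩

theorem minDegree_deltaGraph_cnCp2 [NeZero n] (hcop : n.Coprime p)
    [Fintype (nonIso (CnCp2 n p))] [DecidableRel (deltaGraph (CnCp2 n p)).Adj] :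
    (deltaGraph (CnCp2 n p)).minDegree = n.totient * (p ^ 2 - p) := by
  obtain ⟨u₀, hu₀⟩ := exists_nonIso_cnCp2_fst_eq_zero hcop
  have := nonempty_nonIso_cnCp2 hcop
  refine le_antisymm ?_ (le_minDegree_of_forall_le_degree _ _ fun u => ?_)
  · rw [← ncard_unitNeighborSet hcop u₀, ← neighborSet_eq_unitNeighborSet hcop hu₀,
      ncard_neighborSet]
    exact minDegree_le_degree _ u₀
  · rw [← ncard_unitNeighborSet hcop u, ← ncard_neighborSet]
    exact Set.ncard_le_ncard (unitNeighborSet_subset_neighborSet hcop u)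

theorem connected_induce_compl_deltaGraph_cnCp2 [NeZero n] (hcop : n.Coprime p)
    {X : Set (nonIso (CnCp2 n p))} (hX : X.ncard < n.totient * (p ^ 2 - p)) :
    ((deltaGraph (CnCp2 n p)).induce Xᶜ).Connected := by
  have := nonempty_nonIso_cnCp2 hcop
  refine connected_induce_compl_of_ncard_lt unitNeighborSet
    (unitNeighborSet_subset_neighborSet hcop) (fun _ _ _ _ _ hz' => ?_)
    (fun u => (ncard_unitNeighborSet hcop u).symm ▸ hX)
  exact adj_or_unitNeighborSet_subset_neighborSet hcop hz'.1

end CnCp2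

theorem Nat.totient_mul_prime_sq {n p : ℕ} (hp : p.Prime) (hcop : n.Coprime p) :
    (n * p ^ 2).totient = n.totient * (p ^ 2 - p) := by
  rw [Nat.totient_mul (hcop.pow_right 2), Nat.totient_prime_pow_succ hp 1, pow_one,
    Nat.mul_sub_one, sq]

open scoped Classical in
theorem stmt_10 (n p : ℕ) [NeZero n] [Fact p.Prime] (hcop : Nat.Coprime n p) :
    vertexConnectivity (deltaGraph (Multiplicative (ZMod n × ZMod p × ZMod p)))
        = Nat.totient n * (p ^ 2 - p) ∧
    Nat.totient (Nat.card (Multiplicative (ZMod n × ZMod p × ZMod p)))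
        = Nat.totient n * (p ^ 2 - p) ∧
    (deltaGraph (Multiplicative (ZMod n × ZMod p × ZMod p))).minDegree
        = Nat.totient n * (p ^ 2 - p) := by
  have hδ := minDegree_deltaGraph_cnCp2 hcop
  have := nonempty_nonIso_cnCp2 hcop
  refine ⟨?_, ?_, hδ⟩
  · rw [vertexConnectivity_eq_minDegree fun X hX =>
      connected_induce_compl_deltaGraph_cnCp2 hcop (hδ ▸ hX), hδ]
  · rw [Nat.card_congr Multiplicative.toAdd, Nat.card_prod, Nat.card_prod, Nat.card_zmod,
      Nat.card_zmod, ← sq, Nat.totient_mul_prime_sq Fact.out hcop]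
end

section
/- Let G be a finite 2-generated nilpotent group that is not a cyclic group of even order, and assume G is nontrivial. Then every non-isolated vertex of the generating graph Γ(G) has even degree. -/
open SimpleGraph

/-!
If `⟨g⟩ = G`, then `G` is cyclic, hence of odd order, and `g` is adjacent to all `|G| - 1` other
elements. Otherwise the neighbours of `g` are exactly the `h` with `⟨g, h⟩ = G`; this set is a union
of left cosets of `⟨g⟩` and is closed under inversion. If `g` has even order, `|⟨g⟩|` divides its
size. If `g` has odd order, inversion has no fixed point on it: a partner `t` with `t² = 1` would
commute with `g` (elements of coprime orders commute in a nilpotent group), so `G = ⟨g t⟩` would be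
cyclic of even order.
-/

open Subgroup
open scoped Pointwise

theorem Set.even_natCard_of_involution {α : Type*} (s : Set α) [Finite s] (f : α → α)
    (hf : Set.MapsTo f s s) (hinv : ∀ x ∈ s, f (f x) = x) (hfix : ∀ x ∈ s, f x ≠ x) :
    Even (Nat.card s) := by
  classical
  have : Fintype s := Fintype.ofFinite s
  let σ : Equiv.Perm s := Function.Involutive.toPerm (hf.restrict f s s)
    fun x => Subtype.ext (hinv x x.2)
  have hσ : σ ^ 2 = 1 := Equiv.ext fun x => Subtype.ext (hinv x x.2)
  have hsupp : σ.support = Finset.univ := Finset.eq_univ_iff_forall.mpr fun x =>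
    Equiv.Perm.mem_support.mpr fun hx => hfix x x.2 (congrArg Subtype.val hx)
  rw [even_iff_two_dvd, Nat.card_eq_fintype_card, ← Finset.card_univ, ← hsupp]
  exact Equiv.Perm.two_dvd_card_support hσ

theorem Subgroup.natCard_dvd_of_mul_mem {G : Type*} [Group G] (H : Subgroup G) (s : Set G)
    (hs : ∀ x ∈ s, ∀ k ∈ H, x * k ∈ s) : Nat.card H ∣ Nat.card s := by
  have hsH : s * (H : Set G) = s := by
    refine subset_antisymm ?_ fun x hx => ⟨x, hx, 1, H.one_mem, mul_one x⟩
    rintro _ ⟨x, hx, k, hk, rfl⟩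
    exact hs x hx k hk
  rw [← hsH, card_mul_eq_card_subgroup_mul_card_quotient]
  exact dvd_mul_right _ _

theorem Group.IsNilpotent.commute_of_coprime_orderOf {G : Type*} [Group G] [Finite G]
    [Group.IsNilpotent G] {x y : G} (h : (orderOf x).Coprime (orderOf y)) : Commute x y := by
  -- `G` is the direct product of its Sylow subgroups, and in each factor one of the two
  -- components has order dividing both `orderOf x` and `orderOf y`, hence is trivial.
  obtain ⟨e⟩ := (Group.isNilpotent_of_finite_tfae (G := G)).out 0 4 |>.mp ‹_›
  suffices Commute (e.symm x) (e.symm y) by simpa using this.map e.toMonoidHom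
  have hcomp : ∀ (z : G) (p : (Nat.card G).primeFactors) (P : Sylow p G),
      orderOf (e.symm z p P) ∣ orderOf z := fun z p P =>
    orderOf_map_dvd ((Pi.evalMonoidHom _ P).comp ((Pi.evalMonoidHom _ p).comp
      e.symm.toMonoidHom)) z
  refine commute_iff_eq _ _ |>.mpr <| funext fun p => funext fun P => ?_
  have : Fact (p : ℕ).Prime := ⟨Nat.prime_of_mem_primeFactors p.2⟩
  obtain ⟨i, hi⟩ := IsPGroup.iff_orderOf.mp P.isPGroup' (e.symm x p P)
  obtain ⟨j, hj⟩ := IsPGroup.iff_orderOf.mp P.isPGroup' (e.symm y p P)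
  simp only [Pi.mul_apply]
  rcases Nat.eq_zero_or_pos i with rfl | hi0
  · rw [orderOf_eq_one_iff.mp (hi.trans (pow_zero _)), one_mul, mul_one]
  rcases Nat.eq_zero_or_pos j with rfl | hj0
  · rw [orderOf_eq_one_iff.mp (hj.trans (pow_zero _)), one_mul, mul_one]
  have hpx : (p : ℕ) ∣ orderOf x := (dvd_pow_self _ hi0.ne').trans (hi ▸ hcomp x p P)
  have hpy : (p : ℕ) ∣ orderOf y := (dvd_pow_self _ hj0.ne').trans (hj ▸ hcomp y p P)
  exact absurd (Nat.eq_one_of_dvd_coprimes h hpx hpy) this.out.ne_one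

theorem Commute.mem_zpowers_mul_of_coprime {G : Type*} [Group G] {x y : G} (hxy : Commute x y)
    (h : (orderOf x).Coprime (orderOf y)) : x ∈ zpowers (x * y) := by
  obtain ⟨m, hm⟩ := exists_pow_eq_self_of_coprime h.symm
  have hpow : (x * y) ^ orderOf y = x ^ orderOf y := by
    rw [hxy.mul_pow, pow_orderOf_eq_one, mul_one]
  have hx : ((x * y) ^ orderOf y) ^ m ∈ zpowers (x * y) := pow_mem (pow_mem (mem_zpowers _) _) _
  rwa [hpow, hm] at hx

theorem Commute.isCyclic_of_closure_pair_eq_top {G : Type*} [Group G] {x y : G}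
    (hxy : Commute x y) (h : (orderOf x).Coprime (orderOf y)) (hgen : closure {x, y} = ⊤) :
    IsCyclic G := by
  have hx : x ∈ zpowers (x * y) := hxy.mem_zpowers_mul_of_coprime h
  have hy : y ∈ zpowers (x * y) := by
    simpa using mul_mem (inv_mem hx) (mem_zpowers (x * y))
  refine isCyclic_iff_exists_zpowers_eq_top.mpr ⟨x * y, top_unique ?_⟩
  rw [← hgen, closure_le, Set.insert_subset_iff, Set.singleton_subset_iff]
  exact ⟨hx, hy⟩

namespace Subgroup

variable {G : Type*} [Group G]

theorem closure_pair_eq_of_mem {g h h' : G} (h'_mem : h' ∈ closure {g, h})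
    (h_mem : h ∈ closure {g, h'}) : closure {g, h'} = closure {g, h} := by
  refine le_antisymm ?_ ?_ <;>
    rw [closure_le, Set.insert_subset_iff, Set.singleton_subset_iff] <;>
    exact ⟨subset_closure (Set.mem_insert g _), ‹_›⟩

theorem zpowers_le_closure_pair (g h : G) : zpowers g ≤ closure {g, h} :=
  zpowers_le.mpr (subset_closure (Set.mem_insert g _))

theorem mem_closure_pair_right (g h : G) : h ∈ closure {g, h} :=
  subset_closure (Set.mem_insert_of_mem g rfl)

end Subgroup

section GeneratingPartners

variable {G : Type*} [Group G]

def generatingPartners (g : G) : Set G := {h | closure {g, h} = ⊤}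

theorem mem_generatingPartners {g h : G} : h ∈ generatingPartners g ↔ closure {g, h} = ⊤ :=
  Iff.rfl

theorem mul_mem_generatingPartners {g h k : G} (hh : h ∈ generatingPartners g)
    (hk : k ∈ zpowers g) : h * k ∈ generatingPartners g := by
  have hk' : ∀ h', k ∈ closure {g, h'} := fun h' => zpowers_le_closure_pair g h' hk
  have hh' : h ∈ closure {g, h * k} := by
    simpa using mul_mem (mem_closure_pair_right g (h * k)) (inv_mem (hk' (h * k)))
  rw [mem_generatingPartners,
    closure_pair_eq_of_mem (mul_mem (mem_closure_pair_right g h) (hk' h)) hh']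
  exact hh

theorem inv_mem_generatingPartners {g h : G} (hh : h ∈ generatingPartners g) :
    h⁻¹ ∈ generatingPartners g := by
  have hh' : h ∈ closure {g, h⁻¹} := by
    simpa using inv_mem (mem_closure_pair_right g h⁻¹)
  rw [mem_generatingPartners,
    closure_pair_eq_of_mem (inv_mem (mem_closure_pair_right g h)) hh']
  exact hh

theorem orderOf_dvd_natCard_generatingPartners (g : G) :
    orderOf g ∣ Nat.card (generatingPartners g) := by
  rw [← Nat.card_zpowers]
  exact (zpowers g).natCard_dvd_of_mul_mem _ fun _ hh _ hk => mul_mem_generatingPartners hh hk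

theorem isCyclic_and_even_natCard_of_inv_eq_self [Finite G] [Group.IsNilpotent G] {g t : G}
    (hg : Odd (orderOf g)) (hg_top : zpowers g ≠ ⊤) (ht : t ∈ generatingPartners g)
    (htt : t⁻¹ = t) : IsCyclic G ∧ Even (Nat.card G) := by
  have ht1 : t ≠ 1 := by
    rintro rfl
    exact hg_top (by rwa [mem_generatingPartners, Set.pair_comm, closure_insert_one,
      ← zpowers_eq_closure] at ht)
  have ht2 : orderOf t = 2 := orderOf_eq_prime (by rw [sq, ← inv_eq_iff_mul_eq_one, htt]) ht1
  have hco : (orderOf g).Coprime (orderOf t) := ht2 ▸ Nat.coprime_two_right.mpr hg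
  refine ⟨(Group.IsNilpotent.commute_of_coprime_orderOf hco).isCyclic_of_closure_pair_eq_top
    hco ht, ?_⟩
  exact (ht2 ▸ orderOf_dvd_natCard t).even even_two

end GeneratingPartners

section GenGraph

variable {G : Type*} [Group G] {g : G}

theorem neighborSet_genGraph_of_zpowers_eq_top (hg : zpowers g = ⊤) :
    (genGraph G).neighborSet g = {g}ᶜ := by
  ext h
  refine ⟨fun hh => Ne.symm hh.1, fun hh => ⟨Ne.symm hh, top_unique ?_⟩⟩
  exact hg ▸ zpowers_le_closure_pair g h

theorem neighborSet_genGraph_of_zpowers_ne_top (hg : zpowers g ≠ ⊤) :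
    (genGraph G).neighborSet g = generatingPartners g := by
  ext h
  refine ⟨fun hh => hh.2, fun hh => ⟨?_, hh⟩⟩
  rintro rfl
  exact hg (by rwa [mem_generatingPartners, Set.pair_eq_singleton, ← zpowers_eq_closure] at hh)

end GenGraph

open scoped Classical in
theorem stmt_11_general (G : Type*) [Group G] [Fintype G]
    (hnil : Group.IsNilpotent G)
    (hnot : ¬ (IsCyclic G ∧ Even (Fintype.card G)))
    (g : G) :
    Even ((genGraph G).degree g) := by
  rw [← Nat.card_eq_fintype_card] at hnot
  rw [← card_neighborSet_eq_degree, ← Nat.card_eq_fintype_card]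
  by_cases hg_top : zpowers g = ⊤
  · have hcyc : IsCyclic G := isCyclic_iff_exists_zpowers_eq_top.mpr ⟨g, hg_top⟩
    have hodd : Odd (Nat.card G) := Nat.not_even_iff_odd.mp fun heven => hnot ⟨hcyc, heven⟩
    have hcard := Set.ncard_add_ncard_compl {g}
    rw [Set.ncard_singleton] at hcard
    rw [neighborSet_genGraph_of_zpowers_eq_top hg_top, Nat.card_coe_set_eq]
    obtain ⟨k, hk⟩ := hodd
    exact ⟨k, by omega⟩
  rw [neighborSet_genGraph_of_zpowers_ne_top hg_top]
  rcases Nat.even_or_odd (orderOf g) with hg | hg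
  · exact (orderOf_dvd_natCard_generatingPartners g).even hg
  · exact Set.even_natCard_of_involution _ (·⁻¹) (fun _ => inv_mem_generatingPartners)
      (fun t _ => inv_inv t)
      fun t ht htt => hnot (isCyclic_and_even_natCard_of_inv_eq_self hg hg_top ht htt)

open scoped Classical in
theorem stmt_11 (G : Type*) [Group G] [Fintype G] [Nontrivial G]
    (hnil : Group.IsNilpotent G) (h2 : TwoGenerated G)
    (hnot : ¬ (IsCyclic G ∧ Even (Fintype.card G)))
    (g : G) (hg : g ∈ nonIso G) :
    Even ((genGraph G).degree g) :=
  stmt_11_general G hnil hnot g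
end

section
/- For graphs Γ and Δ, the total domination number satisfies γ_t(Γ × Δ) ≤ γ_t(Γ)·γ_t(Δ), where × denotes the direct (tensor) product of graphs. -/
open SimpleGraph

/-- A total dominating set: every vertex is adjacent to some member of `S`. -/
def IsTotalDominatingSet {V : Type*} (Γ : SimpleGraph V) (S : Set V) : Prop :=
  ∀ v, ∃ s ∈ S, Γ.Adj v s

/-- The total domination number: least size of a total dominating set. -/
noncomputable def totalDominationNumber {V : Type*} (Γ : SimpleGraph V) : ℕ :=
  sInf {n | ∃ S : Set V, S.ncard = n ∧ IsTotalDominatingSet Γ S}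

/-- The direct (tensor) product of two simple graphs. -/
def tensorProd {α β : Type*} (Γ : SimpleGraph α) (Δ : SimpleGraph β) :
    SimpleGraph (α × β) where
  Adj x y := Γ.Adj x.1 y.1 ∧ Δ.Adj x.2 y.2
  symm := ⟨fun x y ⟨h1, h2⟩ => ⟨h1.symm, h2.symm⟩⟩
  loopless := ⟨fun x h => Γ.loopless.irrefl x.1 h.1⟩

section TotalDomination

variable {V : Type*} {Γ : SimpleGraph V}

theorem totalDominationNumber_le_ncard {S : Set V} (hS : IsTotalDominatingSet Γ S) :
    totalDominationNumber Γ ≤ S.ncard :=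
  Nat.sInf_le ⟨S, rfl, hS⟩

theorem exists_isTotalDominatingSet_ncard_eq_totalDominationNumber
    (h : ∃ S : Set V, IsTotalDominatingSet Γ S) :
    ∃ S : Set V, S.ncard = totalDominationNumber Γ ∧ IsTotalDominatingSet Γ S := by
  obtain ⟨S, hS⟩ := h
  exact Nat.sInf_mem (s := {n | ∃ S : Set V, S.ncard = n ∧ IsTotalDominatingSet Γ S})
    ⟨S.ncard, S, rfl, hS⟩

end TotalDomination

theorem IsTotalDominatingSet.prod {α β : Type*} {Γ : SimpleGraph α} {Δ : SimpleGraph β}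
    {S : Set α} {T : Set β} (hS : IsTotalDominatingSet Γ S) (hT : IsTotalDominatingSet Δ T) :
    IsTotalDominatingSet (tensorProd Γ Δ) (S ×ˢ T) := by
  rintro ⟨v, w⟩
  obtain ⟨s, hs, hvs⟩ := hS v
  obtain ⟨t, ht, hwt⟩ := hT w
  exact ⟨(s, t), ⟨hs, ht⟩, hvs, hwt⟩

theorem stmt_14_general {α β : Type*}
    (Γ : SimpleGraph α) (Δ : SimpleGraph β)
    (hΓ : ∃ S : Set α, IsTotalDominatingSet Γ S)
    (hΔ : ∃ S : Set β, IsTotalDominatingSet Δ S) :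
    totalDominationNumber (tensorProd Γ Δ)
      ≤ totalDominationNumber Γ * totalDominationNumber Δ := by
  obtain ⟨S, hS_card, hS⟩ := exists_isTotalDominatingSet_ncard_eq_totalDominationNumber hΓ
  obtain ⟨T, hT_card, hT⟩ := exists_isTotalDominatingSet_ncard_eq_totalDominationNumber hΔ
  calc totalDominationNumber (tensorProd Γ Δ)
      ≤ (S ×ˢ T).ncard := totalDominationNumber_le_ncard (hS.prod hT)
    _ = totalDominationNumber Γ * totalDominationNumber Δ := by
      rw [Set.ncard_prod, hS_card, hT_card]

theorem stmt_14 {α β : Type*} [Fintype α] [Fintype β]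
    (Γ : SimpleGraph α) (Δ : SimpleGraph β)
    (hΓ : ∃ S : Set α, IsTotalDominatingSet Γ S)
    (hΔ : ∃ S : Set β, IsTotalDominatingSet Δ S) :
    totalDominationNumber (tensorProd Γ Δ)
      ≤ totalDominationNumber Γ * totalDominationNumber Δ :=
  stmt_14_general Γ Δ hΓ hΔ
end

section
/- Let Γ = K_{a₁} × ⋯ × K_{a_s} be a direct (tensor) product of complete graphs with 2 ≤ a₁ ≤ ⋯ ≤ a_s and a₁ > s. Then γ_t(Γ) = s + 1, with the set {(k,k,...,k) : 1 ≤ k ≤ s+1} being a total dominating set. -/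
/-!
A vertex `v` is adjacent to the constant vertex `(k, …, k)` exactly when `k` differs from all `s`
coordinates of `v`; some `k ∈ {0, …, s}` does, so the `s + 1` constant vertices (which exist as
`s < a i`) dominate. Conversely, for vertices `w₁, …, w_s` the vertex whose `i`-th coordinate is
that of `wᵢ` agrees with every `wᵢ` somewhere, so it is adjacent to none of them.
-/

open SimpleGraph

/-- The direct (tensor) product `K_{a 0} × ⋯ × K_{a (s-1)}` of complete graphs:
tuples are adjacent iff they differ in every coordinate. -/
def prodCompleteGraph {s : ℕ} (a : Fin s → ℕ) :
    SimpleGraph ((i : Fin s) → Fin (a i)) where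
  Adj x y := x ≠ y ∧ ∀ i, x i ≠ y i
  symm := ⟨fun x y ⟨h, h'⟩ => ⟨h.symm, fun i => (h' i).symm⟩⟩
  loopless := ⟨fun x h => h.1 rfl⟩

theorem totalDominationNumber_eq_of_isTotalDominatingSet {V : Type*} {Γ : SimpleGraph V}
    {S : Set V} {n : ℕ} (hS : IsTotalDominatingSet Γ S) (hcard : S.ncard = n)
    (hmin : ∀ T, IsTotalDominatingSet Γ T → n ≤ T.ncard) : totalDominationNumber Γ = n :=
  le_antisymm (Nat.sInf_le ⟨S, hcard, hS⟩)
    (le_csInf ⟨n, S, hcard, hS⟩ fun _ ⟨T, hT, hTdom⟩ => hT ▸ hmin T hTdom)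

theorem Set.Finite.exists_fin_cover_of_ncard_le {α : Type*} {S : Set α} (hfin : S.Finite)
    (hne : S.Nonempty) {n : ℕ} (h : S.ncard ≤ n) : ∃ g : Fin n → α, S ⊆ Set.range g := by
  have := hfin.fintype
  have : Nonempty S := hne.to_subtype
  obtain ⟨f⟩ : Nonempty (S ↪ Fin n) := Function.Embedding.nonempty_of_card_le
    (by rwa [Fintype.card_fin, ← Nat.card_eq_fintype_card, Nat.card_coe_set_eq])
  exact ⟨Subtype.val ∘ Function.invFun f,
    fun w hw => ⟨f ⟨w, hw⟩, by simp [Function.leftInverse_invFun f.injective _]⟩⟩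

theorem Fin.exists_forall_ne {n : ℕ} (v : Fin n → ℕ) : ∃ k : Fin (n + 1), ∀ i, v i ≠ k := by
  classical
  have hcard : (Finset.univ.image v).card < (Finset.range (n + 1)).card := by
    simpa using (Finset.card_image_le (s := Finset.univ) (f := v)).trans_lt (Nat.lt_succ_self _)
  obtain ⟨k, hk, hkv⟩ := Finset.exists_mem_notMem_of_card_lt_card hcard
  exact ⟨⟨k, Finset.mem_range.mp hk⟩,
    fun i h => hkv (Finset.mem_image.mpr ⟨i, Finset.mem_univ i, h⟩)⟩

namespace prodCompleteGraph

variable {s : ℕ} {a : Fin s → ℕ}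

theorem adj_of_forall_ne (hs : 0 < s) {x y : (i : Fin s) → Fin (a i)} (h : ∀ i, x i ≠ y i) :
    (prodCompleteGraph a).Adj x y :=
  ⟨fun hxy => h ⟨0, hs⟩ (congrFun hxy _), h⟩

theorem not_adj_diag (g : Fin s → (i : Fin s) → Fin (a i)) (j : Fin s) :
    ¬ (prodCompleteGraph a).Adj (fun i => g i i) (g j) :=
  fun h => h.2 j rfl

theorem lt_ncard_of_isTotalDominatingSet (hpos : ∀ i, 0 < a i)
    {S : Set ((i : Fin s) → Fin (a i))} (hS : IsTotalDominatingSet (prodCompleteGraph a) S) :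
    s < S.ncard := by
  by_contra! hle
  obtain ⟨w, hw, -⟩ := hS fun i => ⟨0, hpos i⟩
  obtain ⟨g, hg⟩ := S.toFinite.exists_fin_cover_of_ncard_le ⟨w, hw⟩ hle
  obtain ⟨_, hmem, hadj⟩ := hS fun i => g i i
  obtain ⟨j, rfl⟩ := hg hmem
  exact not_adj_diag g j hadj

def diagonal (hlt : ∀ i, s < a i) (k : Fin (s + 1)) : (i : Fin s) → Fin (a i) :=
  fun i => ⟨k, k.is_le.trans_lt (hlt i)⟩

theorem diagonal_injective (hs : 0 < s) (hlt : ∀ i, s < a i) :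
    Function.Injective (diagonal hlt) :=
  fun _ _ h => Fin.ext (congrArg Fin.val (congrFun h ⟨0, hs⟩) :)

theorem range_diagonal (hlt : ∀ i, s < a i) :
    Set.range (diagonal hlt) = {x | ∃ k : Fin (s + 1), ∀ i, (x i : ℕ) = k} := by
  ext x
  exact ⟨fun ⟨k, hk⟩ => ⟨k, fun i => hk ▸ rfl⟩,
    fun ⟨k, hk⟩ => ⟨k, funext fun i => Fin.ext (hk i).symm⟩⟩

theorem isTotalDominatingSet_range_diagonal (hs : 0 < s) (hlt : ∀ i, s < a i) :
    IsTotalDominatingSet (prodCompleteGraph a) (Set.range (diagonal hlt)) := by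
  intro v
  obtain ⟨k, hk⟩ := Fin.exists_forall_ne fun i => (v i : ℕ)
  exact ⟨diagonal hlt k, ⟨k, rfl⟩, adj_of_forall_ne hs fun i h => hk i (congrArg Fin.val h)⟩

end prodCompleteGraph

open prodCompleteGraph

theorem stmt_16_general (s : ℕ) (a : Fin s → ℕ) (hmono : Monotone a)
    (hs : 0 < s) (ha : s < a ⟨0, hs⟩) :
    IsTotalDominatingSet (prodCompleteGraph a)
      {x | ∃ k : Fin (s + 1), ∀ i, (x i : ℕ) = (k : ℕ)} ∧
    totalDominationNumber (prodCompleteGraph a) = s + 1 := by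
  have hlt : ∀ i, s < a i := fun i => ha.trans_le (hmono (Nat.zero_le i))
  have hdom := isTotalDominatingSet_range_diagonal hs hlt
  have hcard : (Set.range (diagonal hlt)).ncard = s + 1 := by
    rw [Set.ncard_range_of_injective (diagonal_injective hs hlt), Nat.card_fin]
  rw [← range_diagonal hlt]
  exact ⟨hdom, totalDominationNumber_eq_of_isTotalDominatingSet hdom hcard fun _ hT =>
    lt_ncard_of_isTotalDominatingSet (fun i => s.zero_le.trans_lt (hlt i)) hT⟩

theorem stmt_16 (s : ℕ) (a : Fin s → ℕ) (hmono : Monotone a) (h2 : ∀ i, 2 ≤ a i)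
    (hs : 0 < s) (ha : s < a ⟨0, hs⟩) :
    IsTotalDominatingSet (prodCompleteGraph a)
      {x | ∃ k : Fin (s + 1), ∀ i, (x i : ℕ) = (k : ℕ)} ∧
    totalDominationNumber (prodCompleteGraph a) = s + 1 :=
  stmt_16_general s a hmono hs ha
end

section
/- Let G = ⟨g⟩ be a cyclic group of order n with distinct prime divisors p₁,...,p_r. Then the set consisting of all φ(n) generators of G together with the elements g^{p₁}, ..., g^{p_r} induces a complete subgraph of the generating graph Γ(G); in particular ω(Γ(G)) ≥ φ(n) + r. -/
/-!
A generator of `G` is adjacent to every other element. For distinct primes `p, q` dividing `n`,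
Bézout's identity writes `g` as a word in `g ^ p` and `g ^ q`, so these two also generate `G`.
Each `g ^ p` has order `n / p < n`, so it is not a generator, and `p ↦ g ^ p` is injective on
the prime divisors; the clique therefore has exactly `φ(n) + r` elements.
-/

open SimpleGraph

namespace Subgroup

variable {G : Type*} [Group G]

theorem closure_pair_eq_top_of_zpowers_eq_top {x : G} (hx : zpowers x = ⊤) (y : G) :
    closure {x, y} = ⊤ :=
  top_le_iff.mp <| hx ▸ zpowers_eq_closure x ▸ closure_mono (by simp)

theorem mem_closure_pow_pair_of_coprime (g : G) {a b : ℕ} (hab : a.Coprime b) :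
    g ∈ closure {g ^ a, g ^ b} := by
  have hbezout : (a : ℤ) * a.gcdA b + b * a.gcdB b = 1 := by
    rw [← Nat.cast_one, ← hab.gcd_eq_one, Nat.gcd_eq_gcd_ab]
  have hg : g = (g ^ a) ^ a.gcdA b * (g ^ b) ^ a.gcdB b := by
    rw [← zpow_natCast g a, ← zpow_natCast g b, ← zpow_mul, ← zpow_mul, ← zpow_add, hbezout,
      zpow_one]
  have hmem : (g ^ a) ^ a.gcdA b * (g ^ b) ^ a.gcdB b ∈ closure {g ^ a, g ^ b} :=
    mul_mem (zpow_mem (subset_closure (by simp)) _) (zpow_mem (subset_closure (by simp)) _)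
  rwa [← hg] at hmem

theorem zpowers_eq_top_of_orderOf_eq_card [Fintype G] {x : G} (hx : orderOf x = Fintype.card G) :
    zpowers x = ⊤ :=
  (card_eq_iff_eq_top _).mp <| by rw [Nat.card_zpowers, hx, Nat.card_eq_fintype_card]

end Subgroup

open Subgroup

section

variable {G : Type*} [Group G]

theorem genGraph_adj_of_zpowers_eq_top {x y : G} (hx : zpowers x = ⊤) (hne : x ≠ y) :
    (genGraph G).Adj x y :=
  ⟨hne, closure_pair_eq_top_of_zpowers_eq_top hx y⟩

theorem genGraph_adj_pow_of_coprime {g : G} (hg : zpowers g = ⊤) {a b : ℕ} (hab : a.Coprime b)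
    (hne : g ^ a ≠ g ^ b) : (genGraph G).Adj (g ^ a) (g ^ b) := by
  refine ⟨hne, top_le_iff.mp <| hg ▸ ?_⟩
  rw [zpowers_le]
  exact mem_closure_pow_pair_of_coprime g hab

theorem orderOf_pow_of_mem_primeFactors {g : G} {p : ℕ} (hp : p ∈ (orderOf g).primeFactors) :
    orderOf (g ^ p) = orderOf g / p :=
  orderOf_pow_of_dvd (Nat.prime_of_mem_primeFactors hp).ne_zero (Nat.dvd_of_mem_primeFactors hp)

theorem orderOf_pow_lt_of_mem_primeFactors {g : G} {p : ℕ} (hp : p ∈ (orderOf g).primeFactors) :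
    orderOf (g ^ p) < orderOf g := by
  obtain ⟨hprime, -, hne⟩ := Nat.mem_primeFactors.mp hp
  rw [orderOf_pow_of_mem_primeFactors hp]
  exact Nat.div_lt_self (Nat.pos_of_ne_zero hne) hprime.one_lt

theorem pow_injOn_primeFactors (g : G) : Set.InjOn (g ^ ·) (orderOf g).primeFactors := by
  intro p hp q hq hpq
  obtain ⟨-, hpdvd, hne⟩ := Nat.mem_primeFactors.mp hp
  have hord := orderOf_pow_of_mem_primeFactors hp
  rw [show g ^ p = g ^ q from hpq, orderOf_pow_of_mem_primeFactors hq] at hord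
  rw [← Nat.div_div_self hpdvd hne, ← hord, Nat.div_div_self (Nat.dvd_of_mem_primeFactors hq) hne]

end

section Cyclic

open Finset

variable {G : Type*} [Group G] [Fintype G] {g : G}

theorem genGraph_isClique_generators_union_pow_primeFactors (hg : zpowers g = ⊤) :
    (genGraph G).IsClique
      ({x | orderOf x = Fintype.card G} ∪ (g ^ ·) '' (Fintype.card G).primeFactors) := by
  rintro x (hx | ⟨p, hp, rfl⟩) y (hy | ⟨q, hq, rfl⟩) hne
  · exact genGraph_adj_of_zpowers_eq_top (zpowers_eq_top_of_orderOf_eq_card hx) hne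
  · exact genGraph_adj_of_zpowers_eq_top (zpowers_eq_top_of_orderOf_eq_card hx) hne
  · exact (genGraph_adj_of_zpowers_eq_top (zpowers_eq_top_of_orderOf_eq_card hy) hne.symm).symm
  · have hpq : p ≠ q := by rintro rfl; exact hne rfl
    exact genGraph_adj_pow_of_coprime hg ((Nat.coprime_primes (Nat.prime_of_mem_primeFactors hp)
      (Nat.prime_of_mem_primeFactors hq)).mpr hpq) hne

theorem card_generators_union_pow_primeFactors [DecidableEq G] (hg : zpowers g = ⊤) :
    #(({x | orderOf x = Fintype.card G} : Finset G) ∪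
        (Fintype.card G).primeFactors.image (g ^ ·)) =
      (Fintype.card G).totient + #(Fintype.card G).primeFactors := by
  have : IsCyclic G := isCyclic_iff_exists_zpowers_eq_top.mpr ⟨g, hg⟩
  have hord : orderOf g = Fintype.card G := by
    rw [orderOf_eq_card_of_zpowers_eq_top hg, Nat.card_eq_fintype_card]
  have hdisj : Disjoint ({x | orderOf x = Fintype.card G} : Finset G)
      ((Fintype.card G).primeFactors.image (g ^ ·)) := by
    rw [Finset.disjoint_left]
    rintro x hx hx'
    obtain ⟨p, hp, rfl⟩ := mem_image.mp hx'
    rw [← hord] at hx hp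
    exact (orderOf_pow_lt_of_mem_primeFactors hp).ne (mem_filter.mp hx).2
  rw [card_union_of_disjoint hdisj, IsCyclic.card_orderOf_eq_totient dvd_rfl,
    card_image_of_injOn (hord ▸ pow_injOn_primeFactors g)]

end Cyclic

theorem stmt_19 (G : Type*) [Group G] [Fintype G] (n : ℕ) (hn : Fintype.card G = n)
    (g : G) (hg : Subgroup.zpowers g = ⊤) :
    (genGraph G).IsClique
      ({x : G | orderOf x = n} ∪ (fun p => g ^ p) '' (n.primeFactors : Set ℕ)) ∧
    Nat.totient n + n.primeFactors.card ≤ (genGraph G).cliqueNum := by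
  classical
  subst hn
  have hclique := genGraph_isClique_generators_union_pow_primeFactors hg
  refine ⟨hclique, ?_⟩
  rw [← card_generators_union_pow_primeFactors hg]
  exact IsClique.card_le_cliqueNum (tc := hclique.subset (by simp))
end
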